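/- Let A be a polarized abelian variety of dimension g over a field K with big monodromy and let ℓ₀ be as in the definition. Then for all primes ℓ ≥ ℓ₀ and every nonzero ℓ-torsion point P ∈ A[ℓ], the residue field degree satisfies [K(P):K]^{2g} ≥ [K(A[ℓ]):K], equivalently [K(P):K]^{-1} ≤ [K(A[ℓ]):K]^{-1/(2g)}. -/

import Mathlib

/-!
The orbit of `P ≠ 0` under the image of `ρ` spans `F_ℓ^{2g}`: it contains the orbit under
`Sp_{2g}(F_ℓ)`, and the symplectic transvection along `v` sends `P` to `P + v` as soon as
`ω(v, P) = 1`. A linear map is determined by its values on a basis chosen inside the orbit, and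
each element of the image maps that basis into the orbit, so the image has at most
`|orbit|^{2g}` elements.
-/

theorem LinearMap.card_le_card_pow_finrank_of_mapsTo {K V W : Type*} [DivisionRing K]
    [AddCommGroup V] [Module K V] [FiniteDimensional K V] [AddCommGroup W] [Module K W]
    {F : Set (V →ₗ[K] W)} {S : Set V} {T : Set W} [Finite T]
    (hS : Submodule.span K S = ⊤) (hF : ∀ f ∈ F, Set.MapsTo f S T) :
    Nat.card F ≤ Nat.card T ^ Module.finrank K V := by
  obtain ⟨t, hts, htspan, htli⟩ := exists_linearIndependent K S
  rw [hS] at htspan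
  let b : Module.Basis t K V := .mk htli (by simp [htspan])
  have : Finite t := Module.Finite.finite_basis b
  have hinj : Function.Injective fun f : F => fun x : t => (⟨f.1 x, hF f f.2 (hts x.2)⟩ : T) :=
    fun f f' h => Subtype.ext <| LinearMap.ext_on htspan fun x hx =>
      congrArg Subtype.val (congrFun h ⟨x, hx⟩)
  calc Nat.card F ≤ Nat.card (t → T) := Nat.card_le_card_of_injective _ hinj
    _ = Nat.card T ^ Module.finrank K V := by
      rw [Nat.card_fun, Module.finrank_eq_nat_card_basis b]

namespace Matrix

variable {l R : Type*} [Fintype l] [DecidableEq l] [CommRing R]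

theorem dotProduct_J_mulVec_self (v : l ⊕ l → R) : v ⬝ᵥ (J l R *ᵥ v) = 0 := by
  rw [← Sum.elim_comp_inl_inr v, J, fromBlocks_mulVec]
  simp [dotProduct, Fintype.sum_sum_type, neg_mulVec, mul_comm]

theorem vecMul_J (v : l ⊕ l → R) : v ᵥ* J l R = -(J l R *ᵥ v) := by
  rw [← mulVec_transpose, J_transpose, neg_mulVec]

/-- The symplectic transvection `x ↦ x + c ω(v, x) v`, where `ω(v, x) = v ⬝ᵥ J x`. -/
def symplecticTransvection (c : R) (v : l ⊕ l → R) : Matrix (l ⊕ l) (l ⊕ l) R :=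
  1 + c • vecMulVec v (v ᵥ* J l R)

theorem symplecticTransvection_mulVec (c : R) (v x : l ⊕ l → R) :
    symplecticTransvection c v *ᵥ x = x + (c * (v ⬝ᵥ (J l R *ᵥ x))) • v := by
  rw [symplecticTransvection, add_mulVec, one_mulVec, smul_mulVec, vecMulVec_mulVec,
    op_smul_eq_smul, smul_smul, ← dotProduct_mulVec]

theorem symplecticTransvection_mem (c : R) (v : l ⊕ l → R) :
    symplecticTransvection c v ∈ symplecticGroup l R := by
  set N := vecMulVec v (v ᵥ* J l R)
  have hJv : J l R *ᵥ (v ᵥ* J l R) = v := by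
    rw [vecMul_J, mulVec_neg, mulVec_mulVec, J_squared, neg_mulVec, one_mulVec, neg_neg]
  have hNJ : N * J l R = -vecMulVec v v := by
    rw [vecMulVec_mul, vecMul_vecMul, J_squared, vecMul_neg, vecMul_one, vecMulVec_neg]
  have hJN : J l R * Nᵀ = vecMulVec v v := by
    rw [transpose_vecMulVec, mul_vecMulVec, hJv]
  have hvvN : vecMulVec v v * Nᵀ = 0 := by
    rw [transpose_vecMulVec, vecMulVec_mul_vecMulVec, dotProduct_comm v, ← dotProduct_mulVec,
      dotProduct_J_mulVec_self, zero_smul, vecMulVec_zero]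
  rw [SymplecticGroup.mem_iff, symplecticTransvection, transpose_add, transpose_one,
    transpose_smul, add_mul, one_mul, Matrix.smul_mul, hNJ, mul_add, mul_one, add_mul,
    Matrix.mul_smul, Matrix.mul_smul, hJN, Matrix.smul_mul, Matrix.neg_mul, hvvN]
  simp

theorem span_range_symplecticGroup_mulVec_eq_top {K : Type*} [Field K] {P : l ⊕ l → K}
    (hP : P ≠ 0) :
    Submodule.span K (Set.range fun A : symplecticGroup l K => A.1 *ᵥ P) = ⊤ := by
  set W := Submodule.span K (Set.range fun A : symplecticGroup l K => A.1 *ᵥ P)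
  have hmem : ∀ A ∈ symplecticGroup l K, A *ᵥ P ∈ W := fun A hA =>
    Submodule.subset_span ⟨⟨A, hA⟩, rfl⟩
  have hPW : P ∈ W := by simpa using hmem 1 (one_mem _)
  have hW : ∀ v, v ⬝ᵥ (J l K *ᵥ P) ≠ 0 → v ∈ W := by
    intro v hv
    have hPv := hmem _ (symplecticTransvection_mem (v ⬝ᵥ (J l K *ᵥ P))⁻¹ v)
    rw [symplecticTransvection_mulVec, inv_mul_cancel₀ hv, one_smul] at hPv
    simpa using sub_mem hPv hPW
  obtain ⟨v₀, hv₀⟩ : ∃ v₀, v₀ ⬝ᵥ (J l K *ᵥ P) ≠ 0 := by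
    have hJP : J l K *ᵥ P ≠ 0 := fun h => hP <| by
      simpa [mulVec_mulVec, J_squared, neg_mulVec] using congrArg (J l K *ᵥ ·) h
    obtain ⟨i, hi⟩ := Function.ne_iff.1 hJP
    exact ⟨Pi.single i 1, by rwa [single_dotProduct, one_mul]⟩
  refine Submodule.eq_top_iff'.2 fun u => ?_
  by_cases hu : u ⬝ᵥ (J l K *ᵥ P) = 0
  · have huv := hW (u + v₀) (by rwa [add_dotProduct, hu, zero_add])
    simpa using sub_mem huv (hW v₀ hv₀)
  · exact hW u hu

end Matrix

open Matrix

theorem residue_degree_bound_general (ℓ : ℕ) (hℓ : ℓ.Prime) (g : ℕ)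
    (G : Type*) [Group G]
    (ρ : G →* Matrix.GeneralLinearGroup (Fin g ⊕ Fin g) (ZMod ℓ))
    -- big monodromy at ℓ: the image of `ρ` contains `Sp_{2g}(F_ℓ)`
    (hbig : ∀ A ∈ Matrix.symplecticGroup (Fin g) (ZMod ℓ),
      ∃ σ : G, ((ρ σ : Matrix (Fin g ⊕ Fin g) (Fin g ⊕ Fin g) (ZMod ℓ))) = A)
    (P : (Fin g ⊕ Fin g) → ZMod ℓ) (hP : P ≠ 0) :
    -- `[K(A[ℓ]):K] ≤ [K(P):K]^{2g}`
    Nat.card (Set.range (fun σ : G =>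
        (ρ σ : Matrix (Fin g ⊕ Fin g) (Fin g ⊕ Fin g) (ZMod ℓ)))) ≤
      (Nat.card {w : (Fin g ⊕ Fin g) → ZMod ℓ |
        ∃ σ : G, (ρ σ : Matrix (Fin g ⊕ Fin g) (Fin g ⊕ Fin g) (ZMod ℓ)) *ᵥ P = w}) ^
        (2 * g) := by
  have : Fact ℓ.Prime := ⟨hℓ⟩
  set orbit := {w : (Fin g ⊕ Fin g) → ZMod ℓ |
    ∃ σ : G, (ρ σ : Matrix (Fin g ⊕ Fin g) (Fin g ⊕ Fin g) (ZMod ℓ)) *ᵥ P = w}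
  set image := Set.range fun σ : G => (ρ σ : Matrix (Fin g ⊕ Fin g) (Fin g ⊕ Fin g) (ZMod ℓ))
  have hspan : Submodule.span (ZMod ℓ) orbit = ⊤ := by
    refine top_unique <| span_range_symplecticGroup_mulVec_eq_top hP ▸ Submodule.span_mono ?_
    rintro _ ⟨A, rfl⟩
    obtain ⟨σ, hσ⟩ := hbig A A.2
    exact ⟨σ, by rw [hσ]⟩
  have hmaps : ∀ f ∈ Matrix.toLin' '' image, Set.MapsTo f orbit orbit := by
    rintro _ ⟨_, ⟨σ, rfl⟩, rfl⟩ _ ⟨τ, rfl⟩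
    exact ⟨σ * τ, by simp [mulVec_mulVec]⟩
  calc Nat.card image = Nat.card (Matrix.toLin' '' image) :=
        (Nat.card_image_of_injective Matrix.toLin'.injective _).symm
    _ ≤ Nat.card orbit ^ Module.finrank (ZMod ℓ) (Fin g ⊕ Fin g → ZMod ℓ) :=
        LinearMap.card_le_card_pow_finrank_of_mapsTo hspan hmaps
    _ = Nat.card orbit ^ (2 * g) := by simp [two_mul]

/-- Galois-theoretic dictionary for Villareal's lemma (Lemma 3.2):
For a polarized abelian variety `A/K` of dimension `g` with big monodromy and a prime
`ℓ ≥ ℓ₀`, the image of the mod-`ℓ` representation `ρ = ρ_{A[ℓ]} : G_K → GSp(A[ℓ])`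
contains `Sp(A[ℓ])`, the degree `[K(P):K]` of the residue field of a nonzero torsion
point `P ∈ A[ℓ] ≅ F_ℓ^{2g}` equals the cardinality of the Galois orbit of `P`
(orbit–stabilizer), and `[K(A[ℓ]):K]` equals the cardinality of the image of `ρ`.
The lemma then states `[K(P):K]^{2g} ≥ [K(A[ℓ]):K]`, i.e. the cardinality of the image
of `ρ` is at most the `2g`-th power of the cardinality of the orbit of `P`. -/
theorem residue_degree_bound (ℓ : ℕ) (hℓ : ℓ.Prime) (g : ℕ) (hg : 1 ≤ g)
    (G : Type*) [Group G]
    (ρ : G →* Matrix.GeneralLinearGroup (Fin g ⊕ Fin g) (ZMod ℓ))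
    -- big monodromy at ℓ: the image of `ρ` contains `Sp_{2g}(F_ℓ)`
    (hbig : ∀ A ∈ Matrix.symplecticGroup (Fin g) (ZMod ℓ),
      ∃ σ : G, ((ρ σ : Matrix (Fin g ⊕ Fin g) (Fin g ⊕ Fin g) (ZMod ℓ))) = A)
    (P : (Fin g ⊕ Fin g) → ZMod ℓ) (hP : P ≠ 0) :
    -- `[K(A[ℓ]):K] ≤ [K(P):K]^{2g}`
    Nat.card (Set.range (fun σ : G =>
        (ρ σ : Matrix (Fin g ⊕ Fin g) (Fin g ⊕ Fin g) (ZMod ℓ)))) ≤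
      (Nat.card {w : (Fin g ⊕ Fin g) → ZMod ℓ |
        ∃ σ : G, (ρ σ : Matrix (Fin g ⊕ Fin g) (Fin g ⊕ Fin g) (ZMod ℓ)) *ᵥ P = w}) ^
        (2 * g) :=
  residue_degree_bound_general ℓ hℓ g G ρ hbig P hP
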